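/- arXiv:1302.5991 — 2 statements merged into one kernel-verified Lean document; each statement's English description precedes it below -/
import Mathlib

section
/- If N = q^k * n^2 is an odd perfect number in Eulerian form, then σ(n) ≠ q. -/
/-!
If `σ(n) = q` is prime, multiplicativity forces `n = p ^ a` with `p` prime and `a ≥ 1`. Since
`σ(q ^ k) ≡ 1 (mod q)`, perfection of `q ^ k n ^ 2` gives `q ∣ σ(n ^ 2) = σ(p ^ (2a))`. But
`σ(p ^ (2a)) = σ(p ^ (a - 1)) + p ^ a σ(p ^ a)` leaves the remainder `0 < σ(p ^ (a - 1)) < σ(p ^ a)`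
on division by `σ(p ^ a) = q`.
-/

/-- The sum-of-divisors function. -/
def sigma (n : ℕ) : ℕ := ∑ d ∈ n.divisors, d

/-- The abundancy index as a rational number. -/
noncomputable def Iq (x : ℕ) : ℚ := (sigma x : ℚ) / x

/-- The abundancy index as a real number. -/
noncomputable def Ir (x : ℕ) : ℝ := (sigma x : ℝ) / x

open Finset

lemma sigma_mul_of_coprime {m n : ℕ} (h : m.Coprime n) : sigma (m * n) = sigma m * sigma n :=
  Nat.Coprime.sum_divisors_mul h

lemma sigma_prime_pow {p : ℕ} (hp : p.Prime) (a : ℕ) :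
    sigma (p ^ a) = ∑ i ∈ range (a + 1), p ^ i :=
  Nat.sum_divisors_prime_pow hp

lemma le_sigma {n : ℕ} (hn : n ≠ 0) : n ≤ sigma n :=
  single_le_sum (f := id) (fun _ _ => Nat.zero_le _) (Nat.mem_divisors_self n hn)

lemma eq_one_of_sigma_eq_one {n : ℕ} (h : sigma n = 1) : n = 1 := by
  rcases Nat.eq_zero_or_pos n with rfl | hn
  · simp [sigma] at h
  · have := le_sigma hn.ne'
    omega

lemma exists_prime_pow_of_prime_sigma {n : ℕ} (h : (sigma n).Prime) :
    ∃ p a, p.Prime ∧ 0 < a ∧ n = p ^ a := by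
  have hn0 : n ≠ 0 := by rintro rfl; simp [sigma, Nat.not_prime_zero] at h
  have hn1 : n ≠ 1 := by rintro rfl; simp [sigma, Nat.not_prime_one] at h
  have hp : n.minFac.Prime := Nat.minFac_prime hn1
  set p := n.minFac
  set a := n.factorization p
  have ha : 0 < a := hp.factorization_pos_of_dvd hn0 (Nat.minFac_dvd n)
  have hsplit : p ^ a * (n / p ^ a) = n := Nat.ordProj_mul_ordCompl_eq_self n p
  have hcop : (p ^ a).Coprime (n / p ^ a) := (Nat.coprime_ordCompl hp hn0).pow_left a
  rw [← hsplit, sigma_mul_of_coprime hcop, Nat.prime_mul_iff] at h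
  have hpow : sigma (p ^ a) ≠ 1 := by
    have := le_sigma (pow_ne_zero a hp.ne_zero)
    have := Nat.one_lt_pow ha.ne' hp.one_lt
    omega
  have hm : n / p ^ a = 1 := by
    rcases h with ⟨-, h⟩ | ⟨-, h⟩
    · exact eq_one_of_sigma_eq_one h
    · exact absurd h hpow
  exact ⟨p, a, hp, ha, by rw [← hsplit, hm, mul_one]⟩

lemma not_dvd_sigma_prime_pow {q : ℕ} (hq : q.Prime) (k : ℕ) : ¬ q ∣ sigma (q ^ k) := by
  rw [sigma_prime_pow hq, geom_sum_succ, Nat.dvd_add_right (dvd_mul_right _ _)]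
  exact hq.not_dvd_one

lemma dvd_sigma_of_perfect {q k m : ℕ} (hq : q.Prime) (hk : k ≠ 0) (hco : q.Coprime m)
    (hperf : sigma (q ^ k * m) = 2 * (q ^ k * m)) : q ∣ sigma m := by
  rw [sigma_mul_of_coprime (hco.pow_left k)] at hperf
  have : q ∣ sigma (q ^ k) * sigma m :=
    hperf ▸ dvd_mul_of_dvd_right (dvd_mul_of_dvd_left (dvd_pow_self q hk) m) 2
  exact (hq.dvd_mul.mp this).resolve_left (not_dvd_sigma_prime_pow hq k)

lemma geom_sum_not_dvd_geom_sum_two_mul {p a : ℕ} (hp : 0 < p) (ha : 0 < a) :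
    ¬ (∑ i ∈ range (a + 1), p ^ i) ∣ ∑ i ∈ range (2 * a + 1), p ^ i := by
  have hsplit : ∑ i ∈ range (2 * a + 1), p ^ i
      = ∑ i ∈ range a, p ^ i + p ^ a * ∑ i ∈ range (a + 1), p ^ i := by
    rw [show 2 * a + 1 = a + (a + 1) by ring, sum_range_add, mul_sum]
    simp only [pow_add]
  rw [hsplit, Nat.dvd_add_left (dvd_mul_left _ _)]
  intro hdvd
  have hpos : 0 < ∑ i ∈ range a, p ^ i :=
    sum_pos (fun i _ => pow_pos hp i) (nonempty_range_iff.mpr ha.ne')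
  have := Nat.le_of_dvd hpos hdvd
  rw [geom_sum_succ'] at this
  have := pow_pos hp a
  omega

lemma sigma_prime_pow_not_dvd_sigma_sq {p a : ℕ} (hp : p.Prime) (ha : 0 < a) :
    ¬ sigma (p ^ a) ∣ sigma ((p ^ a) ^ 2) := by
  rw [← pow_mul, sigma_prime_pow hp, sigma_prime_pow hp, mul_comm a 2]
  exact geom_sum_not_dvd_geom_sum_two_mul hp.pos ha

theorem stmt3_general (q k n N : ℕ)
    (hq : Nat.Prime q) (hk4 : k % 4 = 1)
    (hco : Nat.Coprime q n) (hN : N = q ^ k * n ^ 2)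
    (hperf : sigma N = 2 * N) :
    sigma n ≠ q := by
  intro hs
  obtain ⟨p, a, hp, ha, rfl⟩ := exists_prime_pow_of_prime_sigma (hs ▸ hq)
  have hdvd : q ∣ sigma ((p ^ a) ^ 2) :=
    dvd_sigma_of_perfect hq (by omega) (hco.pow_right 2) (hN ▸ hperf)
  exact sigma_prime_pow_not_dvd_sigma_sq hp ha (hs ▸ hdvd)

theorem stmt3 (q k n N : ℕ)
    (hq : Nat.Prime q) (hq4 : q % 4 = 1) (hk4 : k % 4 = 1)
    (hco : Nat.Coprime q n) (hN : N = q ^ k * n ^ 2)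
    (hodd : Odd N) (hperf : sigma N = 2 * N) :
    sigma n ≠ q :=
  stmt3_general q k n N hq hk4 hco hN hperf
end

section
/- If N = q^k * n^2 is an odd perfect number in Eulerian form and σ(n)/q < σ(q)/n (i.e., n·σ(n) < q·σ(q)), then k = 1. -/
/-!
If `k ≠ 1` then `k ≥ 5`. Since `σ(q^k) ≡ 1 (mod q)` is prime to `q^k`, perfection
`σ(q^k) σ(n²) = 2 q^k n²` forces `σ(q^k) ∣ 2n²`, so `q^k < σ(q^k) ≤ 2n² ≤ 2n σ(n) < 2q(q+1)`,
which is impossible for `q ≥ 2` and `k ≥ 5`.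
-/

lemma sigma_eq_sum_properDivisors_add_self (m : ℕ) :
    sigma m = (∑ d ∈ m.properDivisors, d) + m :=
  Nat.sum_divisors_eq_sum_properDivisors_add_self

lemma self_le_sigma (m : ℕ) : m ≤ sigma m := by
  rw [sigma_eq_sum_properDivisors_add_self]
  exact Nat.le_add_left m _

lemma self_lt_sigma {m : ℕ} (hm : 1 < m) : m < sigma m := by
  have hone : 1 ≤ ∑ d ∈ m.properDivisors, d :=
    Finset.single_le_sum (f := id) (fun _ _ => Nat.zero_le _)
      (Nat.one_mem_properDivisors_iff_one_lt.2 hm)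
  rw [sigma_eq_sum_properDivisors_add_self]
  omega

lemma sigma_mul_of_coprime_s5 {a b : ℕ} (h : a.Coprime b) : sigma (a * b) = sigma a * sigma b :=
  Nat.Coprime.sum_divisors_mul h

lemma Nat.Prime.sigma_eq {p : ℕ} (hp : p.Prime) : sigma p = p + 1 := by
  rw [sigma, hp.divisors, Finset.sum_pair hp.one_lt.ne, add_comm]

lemma Nat.Prime.sigma_pow_succ {p : ℕ} (hp : p.Prime) (k : ℕ) :
    sigma (p ^ (k + 1)) = 1 + p * sigma (p ^ k) := by
  rw [sigma, sigma, Nat.sum_divisors_prime_pow hp, Nat.sum_divisors_prime_pow hp,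
    Finset.sum_range_succ', Finset.mul_sum, add_comm]
  simp only [pow_succ', pow_zero]

lemma Nat.Prime.coprime_sigma_pow {p : ℕ} (hp : p.Prime) (k : ℕ) : (sigma (p ^ k)).Coprime p := by
  cases k with
  | zero => simp [sigma]
  | succ k => rw [hp.sigma_pow_succ, Nat.coprime_add_mul_left_left]; exact Nat.coprime_one_left p

lemma Nat.Prime.sigma_pow_dvd_two_mul {p k m : ℕ} (hp : p.Prime) (hpm : p.Coprime m)
    (hperf : sigma (p ^ k * m) = 2 * (p ^ k * m)) : sigma (p ^ k) ∣ 2 * m := by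
  have hdvd : sigma (p ^ k) ∣ 2 * m * p ^ k :=
    ⟨sigma m, by rw [← sigma_mul_of_coprime_s5 (hpm.pow_left k), hperf]; ring⟩
  exact ((hp.coprime_sigma_pow k).pow_right k).dvd_of_dvd_mul_right hdvd

lemma two_mul_mul_succ_lt_pow_five {q : ℕ} (hq : 2 ≤ q) : 2 * (q * (q + 1)) < q ^ 5 := by
  calc 2 * (q * (q + 1)) ≤ 2 * (q * (2 * q)) := by gcongr; omega
    _ < q ^ 2 * 2 ^ 3 := by nlinarith
    _ ≤ q ^ 2 * q ^ 3 := by gcongr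
    _ = q ^ 5 := by ring

theorem stmt5_general (q k n N : ℕ)
    (hq : Nat.Prime q) (hk4 : k % 4 = 1)
    (hco : Nat.Coprime q n) (hN : N = q ^ k * n ^ 2)
    (hperf : sigma N = 2 * N) (h : n * sigma n < q * sigma q) :
    k = 1 := by
  by_contra hk1
  have hk5 : 5 ≤ k := by omega
  have hn : n ≠ 0 := by
    rintro rfl
    exact hq.one_lt.ne' (Nat.coprime_zero_right q |>.mp hco)
  subst hN
  have hσ_le : sigma (q ^ k) ≤ 2 * n ^ 2 :=
    Nat.le_of_dvd (by positivity) (hq.sigma_pow_dvd_two_mul (hco.pow_right 2) hperf)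
  have hlt_σ : q ^ k < sigma (q ^ k) := self_lt_sigma (Nat.one_lt_pow (by omega) hq.one_lt)
  have hn_sq : n ^ 2 < q * (q + 1) :=
    calc n ^ 2 = n * n := sq n
      _ ≤ n * sigma n := Nat.mul_le_mul_left n (self_le_sigma n)
      _ < q * sigma q := h
      _ = q * (q + 1) := by rw [hq.sigma_eq]
  have hq5 : q ^ 5 ≤ q ^ k := Nat.pow_le_pow_right hq.pos hk5
  have hq5_large := two_mul_mul_succ_lt_pow_five hq.two_le
  omega

theorem stmt5 (q k n N : ℕ)
    (hq : Nat.Prime q) (hq4 : q % 4 = 1) (hk4 : k % 4 = 1)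
    (hco : Nat.Coprime q n) (hN : N = q ^ k * n ^ 2)
    (hodd : Odd N) (hperf : sigma N = 2 * N) (h : n * sigma n < q * sigma q) :
    k = 1 :=
  stmt5_general q k n N hq hk4 hco hN hperf h
end
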